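/- Every closed convex set K ⊆ ℝ^d with nonempty interior and K ≠ ℝ^d has at least one boundary point v such that the supporting cone S(K,v) is a closed half-space. -/

import Mathlib

open Set Filter Topology Pointwise

noncomputable section

abbrev Euc (d : ℕ) := EuclideanSpace ℝ (Fin d)

/-- The supporting cone of `K` at `v`: `cl (⋃_{λ>0} λ (K - v))`. -/
def suppCone {d : ℕ} (K : Set (Euc d)) (v : Euc d) : Set (Euc d) :=
  closure (⋃ (l : ℝ) (_ : 0 < l), l • ((fun z => z - v) '' K))

/-- Every closed convex set `K ⊊ ℝ^d` with nonempty interior has a boundary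
point at which the supporting cone is a closed half-space. -/
theorem exists_suppCone_halfspace {d : ℕ} (K : Set (Euc d))
    (hKcl : IsClosed K) (hKconv : Convex ℝ K)
    (hKint : (interior K).Nonempty) (hKne : K ≠ Set.univ) :
    ∃ v ∈ frontier K, ∃ u : Euc d, ‖u‖ = 1 ∧
      suppCone K v = {x : Euc d | (inner ℝ x u : ℝ) ≤ 0} := by
  obtain ⟨c, hc⟩ := hKint
  set C : Set (Euc d) := (interior K)ᶜ with hCdef
  have hCclosed : IsClosed C := isClosed_compl_iff.mpr isOpen_interior
  have hCne : C.Nonempty := by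
    obtain ⟨p, hp⟩ := nonempty_compl.mpr hKne
    exact ⟨p, fun h => hp (interior_subset h)⟩
  have hcC : c ∉ C := not_not_intro hc
  obtain ⟨v, hvC, hvd⟩ := hCclosed.exists_infDist_eq_dist hCne c
  set r := Metric.infDist c C with hrdef
  have hr : 0 < r := (hCclosed.notMem_iff_infDist_pos hCne).mp hcC
  have hball : Metric.ball c r ⊆ interior K := by
    intro w hw
    by_contra hwK
    have h1 : r ≤ dist c w := Metric.infDist_le_dist_of_mem hwK
    rw [Metric.mem_ball, dist_comm] at hw
    exact absurd hw (not_lt.mpr h1)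
  have hv_c : ‖v - c‖ = r := by
    rw [← dist_eq_norm, dist_comm]; exact hvd.symm
  have hvK : v ∈ K := by
    have h1 : v ∈ Metric.closedBall c r := by
      rw [Metric.mem_closedBall, dist_eq_norm, hv_c]
    have h2 : Metric.closedBall c r = closure (Metric.ball c r) :=
      (closure_ball c hr.ne').symm
    have h3 := closure_mono (hball.trans interior_subset)
    rw [hKcl.closure_eq] at h3
    exact h3 (h2 ▸ h1)
  -- the normal property
  have hnormal : ∀ z ∈ K, (inner ℝ (z - v) (v - c) : ℝ) ≤ 0 := by
    intro z hz
    by_contra hpos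
    push_neg at hpos
    set α : ℝ := (inner ℝ (z - v) (v - c) : ℝ) with hα
    set M : ℝ := ‖z - c‖ with hM
    set t : ℝ := min (1/2) (α / (M ^ 2 + 1)) with htdef
    have hM0 : (0:ℝ) ≤ M := norm_nonneg _
    have ht0 : 0 < t := lt_min (by norm_num) (div_pos hpos (by positivity))
    have ht1 : t < 1 := lt_of_le_of_lt (min_le_left _ _) (by norm_num)
    have htb : t * (M ^ 2 + 1) ≤ α := by
      have h := min_le_right (1/2 : ℝ) (α / (M ^ 2 + 1))
      calc t * (M ^ 2 + 1) ≤ (α / (M ^ 2 + 1)) * (M ^ 2 + 1) := by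
            exact mul_le_mul_of_nonneg_right h (by positivity)
        _ = α := by field_simp
    set ct : Euc d := c + t • (z - c) with hct
    have hdist : ‖v - ct‖ ^ 2 < ((1 - t) * r) ^ 2 := by
      have expand : v - ct = (v - c) - t • (z - c) := by rw [hct]; abel
      rw [expand, norm_sub_sq_real, inner_smul_right, norm_smul]
      have hinner : (inner ℝ (v - c) (z - c) : ℝ) = α + r ^ 2 := by
        have hzc : z - c = (z - v) + (v - c) := by abel
        have e1 : (inner ℝ (v - c) (z - v) : ℝ) = α := by
          rw [hα]; exact real_inner_comm _ _
        have e2 : (inner ℝ (v - c) (v - c) : ℝ) = r ^ 2 := by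
          rw [real_inner_self_eq_norm_sq, hv_c]
        rw [hzc, inner_add_right, e1, e2]
      rw [hinner, Real.norm_eq_abs, abs_of_pos ht0, hv_c]
      nlinarith [mul_pos ht0 hpos, sq_nonneg t, sq_nonneg (t * r),
        mul_le_mul_of_nonneg_left htb ht0.le]
    have hsub : Metric.ball ct ((1 - t) * r) ⊆ K := by
      intro w hw
      have h1t : (0:ℝ) < 1 - t := by linarith
      set b : Euc d := c + (1 - t)⁻¹ • (w - ct) with hb
      have hbball : b ∈ Metric.ball c r := by
        rw [Metric.mem_ball, dist_eq_norm, hb]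
        have h4 : c + (1 - t)⁻¹ • (w - ct) - c = (1 - t)⁻¹ • (w - ct) := by abel
        rw [h4, norm_smul, Real.norm_eq_abs, abs_of_pos (inv_pos.mpr h1t)]
        rw [Metric.mem_ball, dist_eq_norm] at hw
        calc (1 - t)⁻¹ * ‖w - ct‖ < (1 - t)⁻¹ * ((1 - t) * r) := by
              exact mul_lt_mul_of_pos_left hw (inv_pos.mpr h1t)
          _ = r := by field_simp
      have hbK : b ∈ K := interior_subset (hball hbball)
      have hwcomb : w = (1 - t) • b + t • z := by
        rw [hb, hct]
        have h1t' : (1 - t) ≠ 0 := h1t.ne'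
        rw [smul_add, smul_smul, mul_inv_cancel₀ h1t', one_smul]
        module
      rw [hwcomb]
      exact hKconv hbK hz h1t.le ht0.le (by ring)
    have hvmem : v ∈ Metric.ball ct ((1 - t) * r) := by
      rw [Metric.mem_ball, dist_eq_norm]
      have h1t : (0:ℝ) < (1 - t) * r := mul_pos (by linarith) hr
      exact lt_of_pow_lt_pow_left₀ 2 h1t.le hdist
    exact hvC ((interior_maximal hsub Metric.isOpen_ball) hvmem)
  -- the chosen normal vector
  refine ⟨v, ⟨subset_closure hvK, hvC⟩, r⁻¹ • (v - c), ?_, ?_⟩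
  · rw [norm_smul, Real.norm_eq_abs, abs_of_pos (inv_pos.mpr hr), hv_c]
    field_simp
  · apply Subset.antisymm
    · apply closure_minimal
      · intro x hx
        simp only [Set.mem_iUnion, Set.mem_smul_set, Set.mem_image] at hx
        obtain ⟨l, hl, y, ⟨z, hz, rfl⟩, rfl⟩ := hx
        show (inner ℝ (l • (z - v)) (r⁻¹ • (v - c)) : ℝ) ≤ 0
        rw [real_inner_smul_left, real_inner_smul_right]
        have h5 := hnormal z hz
        have h6 : (0:ℝ) < r⁻¹ := inv_pos.mpr hr
        have h7 : r⁻¹ * (inner ℝ (z - v) (v - c) : ℝ) ≤ 0 :=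
          mul_nonpos_of_nonneg_of_nonpos h6.le h5
        exact mul_nonpos_of_nonneg_of_nonpos hl.le h7
      · exact isClosed_le (continuous_id.inner continuous_const) continuous_const
    · intro x hx
      simp only [Set.mem_setOf_eq] at hx
      have hx' : (inner ℝ x (v - c) : ℝ) ≤ 0 := by
        rw [real_inner_smul_right] at hx
        nlinarith [inv_pos.mpr hr]
      have key : ∀ y : Euc d, (inner ℝ y (v - c) : ℝ) < 0 →
          y ∈ ⋃ (l : ℝ) (_ : 0 < l), l • ((fun z => z - v) '' K) := by
        intro y hy
        set s : ℝ := min 1 ((-(inner ℝ y (v - c) : ℝ)) / (‖y‖ ^ 2 + 1)) with hs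
        have hs0 : 0 < s := lt_min one_pos (div_pos (by linarith) (by positivity))
        have hsb : s * (‖y‖ ^ 2 + 1) ≤ -(inner ℝ y (v - c) : ℝ) := by
          have h := min_le_right (1:ℝ) ((-(inner ℝ y (v - c) : ℝ)) / (‖y‖ ^ 2 + 1))
          calc s * (‖y‖ ^ 2 + 1)
              ≤ ((-(inner ℝ y (v - c) : ℝ)) / (‖y‖ ^ 2 + 1)) * (‖y‖ ^ 2 + 1) :=
                mul_le_mul_of_nonneg_right h (by positivity)
            _ = -(inner ℝ y (v - c) : ℝ) := by field_simp
        have hzK : v + s • y ∈ K := by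
          apply interior_subset
          apply hball
          rw [Metric.mem_ball, dist_eq_norm]
          have h7 : v + s • y - c = (v - c) + s • y := by abel
          rw [h7]
          have hsq : ‖(v - c) + s • y‖ ^ 2 < r ^ 2 := by
            rw [norm_add_sq_real, inner_smul_right, norm_smul, Real.norm_eq_abs,
              abs_of_pos hs0, hv_c]
            have hcomm : (inner ℝ (v - c) y : ℝ) = (inner ℝ y (v - c) : ℝ) :=
              real_inner_comm _ _
            nlinarith [sq_nonneg s, mul_pos hs0 hs0, sq_nonneg (s * ‖y‖),
              mul_le_mul_of_nonneg_left hsb hs0.le, sq_nonneg ‖y‖]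
          exact lt_of_pow_lt_pow_left₀ 2 hr.le hsq
        refine Set.mem_iUnion.mpr ⟨s⁻¹, Set.mem_iUnion.mpr ⟨inv_pos.mpr hs0, ?_⟩⟩
        refine Set.mem_smul_set.mpr ⟨v + s • y - v, ⟨v + s • y, hzK, rfl⟩, ?_⟩
        rw [add_sub_cancel_left]
        exact inv_smul_smul₀ hs0.ne' y
      show x ∈ closure _
      rw [mem_closure_iff_seq_limit]
      refine ⟨fun n => x - ((n : ℝ) + 1)⁻¹ • (r⁻¹ • (v - c)), fun n => ?_, ?_⟩
      · apply key
        have hn : (0:ℝ) < ((n : ℝ) + 1)⁻¹ := by positivity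
        rw [inner_sub_left, real_inner_smul_left, real_inner_smul_left,
          real_inner_self_eq_norm_sq, hv_c]
        have hrr : r⁻¹ * r ^ 2 = r := by field_simp
        rw [hrr]
        nlinarith [mul_pos hn hr]
      · have h8 : Filter.Tendsto (fun n : ℕ => ((n : ℝ) + 1)⁻¹) atTop (𝓝 0) := by
          simpa [one_div] using (tendsto_one_div_add_atTop_nhds_zero_nat :
            Tendsto (fun n : ℕ => 1 / ((n : ℝ) + 1)) atTop (𝓝 0))
        have h9 := Filter.Tendsto.smul_const h8 (r⁻¹ • (v - c))
        have h10 := Filter.Tendsto.sub (tendsto_const_nhds (x := x)) h9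
        simpa using h10
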